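/- arXiv:1905.01664 — 3 statements merged into one kernel-verified Lean document; each statement's English description precedes it below -/
import Mathlib

section
/- Let μ ≤ δ be reals, 0 < d₀ < R (with R < π/√δ if δ > 0), and let ρ : [d₀, R] → ℝ be a C¹ function satisfying -δ ≤ ρ'(t) + ρ(t)² ≤ -μ for all t, with ρ(d₀) ≥ c_δ(d₀)/s_δ(d₀). Define φ(t) = c_δ(t)/s_δ(t) and F(t) = (ρ(t) - φ(t))·exp(∫_{d₀}^t (ρ(s) + φ(s)) ds). Then F is nondecreasing on [d₀, R] and F(t) ≥ 0 for all t ∈ [d₀, R]; in particular ρ(t) ≥ φ(t) on [d₀, R]. -/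
noncomputable def sdelta (δ r : ℝ) : ℝ :=
  if 0 < δ then Real.sin (Real.sqrt δ * r) / Real.sqrt δ
  else if δ = 0 then r
  else Real.sinh (Real.sqrt (-δ) * r) / Real.sqrt (-δ)

noncomputable def cdelta (δ r : ℝ) : ℝ :=
  if 0 < δ then Real.cos (Real.sqrt δ * r)
  else if δ = 0 then 1
  else Real.cosh (Real.sqrt (-δ) * r)

lemma sdelta_pos_eq {δ : ℝ} (h : 0 < δ) :
    sdelta δ = fun r => Real.sin (Real.sqrt δ * r) / Real.sqrt δ := by
  funext r; simp [sdelta, if_pos h]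

lemma cdelta_pos_eq {δ : ℝ} (h : 0 < δ) :
    cdelta δ = fun r => Real.cos (Real.sqrt δ * r) := by
  funext r; simp [cdelta, if_pos h]

lemma sdelta_zero_eq : sdelta 0 = fun r => r := by
  funext r; simp [sdelta]

lemma cdelta_zero_eq : cdelta 0 = fun _ => 1 := by
  funext r; simp [cdelta]

lemma sdelta_neg_eq {δ : ℝ} (h : δ < 0) :
    sdelta δ = fun r => Real.sinh (Real.sqrt (-δ) * r) / Real.sqrt (-δ) := by
  funext r; simp [sdelta, if_neg (not_lt.2 h.le), if_neg (ne_of_lt h)]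

lemma cdelta_neg_eq {δ : ℝ} (h : δ < 0) :
    cdelta δ = fun r => Real.cosh (Real.sqrt (-δ) * r) := by
  funext r; simp [cdelta, if_neg (not_lt.2 h.le), if_neg (ne_of_lt h)]

lemma sdelta_hasDerivAt (δ t : ℝ) : HasDerivAt (sdelta δ) (cdelta δ t) t := by
  rcases lt_trichotomy 0 δ with h | h | h
  · have hs : Real.sqrt δ ≠ 0 := ne_of_gt (Real.sqrt_pos.2 h)
    rw [sdelta_pos_eq h, cdelta_pos_eq h]
    have h1 : HasDerivAt (fun r : ℝ => Real.sin (Real.sqrt δ * r))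
        (Real.cos (Real.sqrt δ * t) * (Real.sqrt δ * 1)) t :=
      (Real.hasDerivAt_sin _).comp t ((hasDerivAt_id t).const_mul (Real.sqrt δ))
    convert h1.div_const (Real.sqrt δ) using 1
    · rfl
    · rfl
    · simp only [mul_one]; rw [mul_div_cancel_right₀ _ hs]
  · rw [← h, sdelta_zero_eq, cdelta_zero_eq]
    exact hasDerivAt_id t
  · have hs : Real.sqrt (-δ) ≠ 0 := ne_of_gt (Real.sqrt_pos.2 (by linarith))
    rw [sdelta_neg_eq h, cdelta_neg_eq h]
    have h1 : HasDerivAt (fun r : ℝ => Real.sinh (Real.sqrt (-δ) * r))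
        (Real.cosh (Real.sqrt (-δ) * t) * (Real.sqrt (-δ) * 1)) t :=
      (Real.hasDerivAt_sinh _).comp t ((hasDerivAt_id t).const_mul (Real.sqrt (-δ)))
    convert h1.div_const (Real.sqrt (-δ)) using 1
    · rfl
    · rfl
    · simp only [mul_one]; rw [mul_div_cancel_right₀ _ hs]

lemma cdelta_hasDerivAt (δ t : ℝ) : HasDerivAt (cdelta δ) (-δ * sdelta δ t) t := by
  rcases lt_trichotomy 0 δ with h | h | h
  · have hs : Real.sqrt δ ≠ 0 := ne_of_gt (Real.sqrt_pos.2 h)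
    have hδ : Real.sqrt δ * Real.sqrt δ = δ := Real.mul_self_sqrt h.le
    rw [sdelta_pos_eq h, cdelta_pos_eq h]
    have h1 : HasDerivAt (fun r : ℝ => Real.cos (Real.sqrt δ * r))
        (-Real.sin (Real.sqrt δ * t) * (Real.sqrt δ * 1)) t :=
      (Real.hasDerivAt_cos _).comp t ((hasDerivAt_id t).const_mul (Real.sqrt δ))
    convert h1 using 1
    field_simp
    linear_combination (Real.sin (Real.sqrt δ * t)) * hδ
  · rw [← h, sdelta_zero_eq, cdelta_zero_eq]
    simpa using hasDerivAt_const t (1:ℝ)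
  · have hs : Real.sqrt (-δ) ≠ 0 := ne_of_gt (Real.sqrt_pos.2 (by linarith))
    have hδ : Real.sqrt (-δ) * Real.sqrt (-δ) = -δ := Real.mul_self_sqrt (by linarith)
    rw [sdelta_neg_eq h, cdelta_neg_eq h]
    have h1 : HasDerivAt (fun r : ℝ => Real.cosh (Real.sqrt (-δ) * r))
        (Real.sinh (Real.sqrt (-δ) * t) * (Real.sqrt (-δ) * 1)) t :=
      (Real.hasDerivAt_cosh _).comp t ((hasDerivAt_id t).const_mul (Real.sqrt (-δ)))
    convert h1 using 1
    field_simp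
    linear_combination (-Real.sinh (Real.sqrt (-δ) * t)) * hδ

lemma sdelta_continuous (δ : ℝ) : Continuous (sdelta δ) :=
  continuous_iff_continuousAt.2 fun t => (sdelta_hasDerivAt δ t).continuousAt

lemma cdelta_continuous (δ : ℝ) : Continuous (cdelta δ) :=
  continuous_iff_continuousAt.2 fun t => (cdelta_hasDerivAt δ t).continuousAt

lemma sdelta_pos {δ d₀ R : ℝ} (hd₀ : 0 < d₀) (hRδ : 0 < δ → R < Real.pi / Real.sqrt δ) :
    ∀ t ∈ Set.Icc d₀ R, 0 < sdelta δ t := by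
  intro t ht
  obtain ⟨h1, h2⟩ := ht
  have htpos : 0 < t := lt_of_lt_of_le hd₀ h1
  rcases lt_trichotomy 0 δ with h | h | h
  · have hs : 0 < Real.sqrt δ := Real.sqrt_pos.2 h
    rw [sdelta_pos_eq h]
    have hlt : Real.sqrt δ * t < Real.pi := by
      have := hRδ h
      have : t < Real.pi / Real.sqrt δ := lt_of_le_of_lt h2 this
      calc Real.sqrt δ * t < Real.sqrt δ * (Real.pi / Real.sqrt δ) := by
            exact mul_lt_mul_of_pos_left this hs
        _ = Real.pi := by field_simp
    exact div_pos (Real.sin_pos_of_pos_of_lt_pi (by positivity) hlt) hs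
  · rw [← h, sdelta_zero_eq]; exact htpos
  · have hs : 0 < Real.sqrt (-δ) := Real.sqrt_pos.2 (by linarith)
    rw [sdelta_neg_eq h]
    exact div_pos (Real.sinh_pos_iff.2 (by positivity)) hs

/-- Riccati comparison. If `ρ` is `C¹` on `[d₀,R]` with
`-δ ≤ ρ' + ρ² ≤ -μ` and `ρ(d₀) ≥ φ(d₀)` where `φ = c_δ/s_δ`, then
`F(t) = (ρ(t)-φ(t))·exp(∫_{d₀}^t (ρ+φ))` is nondecreasing and nonnegative on `[d₀,R]`;
in particular `ρ ≥ φ` on `[d₀,R]`. -/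
theorem riccati_comparison (μ δ d₀ R : ℝ) (hμδ : μ ≤ δ) (hd₀ : 0 < d₀) (hd₀R : d₀ < R)
    (hRδ : 0 < δ → R < Real.pi / Real.sqrt δ)
    (ρ ρ' : ℝ → ℝ)
    (hderiv : ∀ t ∈ Set.Icc d₀ R, HasDerivAt ρ (ρ' t) t)
    (hric : ∀ t ∈ Set.Icc d₀ R, -δ ≤ ρ' t + (ρ t) ^ 2 ∧ ρ' t + (ρ t) ^ 2 ≤ -μ)
    (hinit : cdelta δ d₀ / sdelta δ d₀ ≤ ρ d₀) :
    MonotoneOn (fun t => (ρ t - cdelta δ t / sdelta δ t) *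
        Real.exp (∫ s in d₀..t, (ρ s + cdelta δ s / sdelta δ s))) (Set.Icc d₀ R) ∧
    ∀ t ∈ Set.Icc d₀ R,
      0 ≤ (ρ t - cdelta δ t / sdelta δ t) *
          Real.exp (∫ s in d₀..t, (ρ s + cdelta δ s / sdelta δ s)) ∧
      cdelta δ t / sdelta δ t ≤ ρ t := by
  set φ : ℝ → ℝ := fun t => cdelta δ t / sdelta δ t with hφdef
  set g : ℝ → ℝ := fun s => ρ s + φ s with hgdef
  set I : ℝ → ℝ := fun t => ∫ s in d₀..t, g s with hIdef
  set F : ℝ → ℝ := fun t => (ρ t - φ t) * Real.exp (I t) with hFdef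
  have hspos := sdelta_pos hd₀ hRδ
  have hφcont : ContinuousOn φ (Set.Icc d₀ R) :=
    ((cdelta_continuous δ).continuousOn).div ((sdelta_continuous δ).continuousOn)
      (fun t ht => ne_of_gt (hspos t ht))
  have hρcont : ContinuousOn ρ (Set.Icc d₀ R) :=
    fun t ht => (hderiv t ht).continuousAt.continuousWithinAt
  have hgcont : ContinuousOn g (Set.Icc d₀ R) := hρcont.add hφcont
  have hgint : ∀ t ∈ Set.Icc d₀ R, IntervalIntegrable g MeasureTheory.volume d₀ t := by
    intro t ht
    apply ContinuousOn.intervalIntegrable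
    rw [Set.uIcc_of_le ht.1]
    exact hgcont.mono (Set.Icc_subset_Icc_right ht.2)
  have hIcont : ContinuousOn I (Set.Icc d₀ R) := by
    have hint : MeasureTheory.IntegrableOn g (Set.uIcc d₀ R) MeasureTheory.volume := by
      rw [Set.uIcc_of_le hd₀R.le]
      exact hgcont.integrableOn_compact isCompact_Icc
    have := intervalIntegral.continuousOn_primitive_interval hint
    rwa [Set.uIcc_of_le hd₀R.le] at this
  have hFcont : ContinuousOn F (Set.Icc d₀ R) :=
    (hρcont.sub hφcont).mul (Real.continuous_exp.comp_continuousOn hIcont)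
  -- derivative of F on the interior
  set φ' : ℝ → ℝ :=
    fun t => ((-δ * sdelta δ t) * sdelta δ t - cdelta δ t * cdelta δ t) / (sdelta δ t) ^ 2
    with hφ'def
  have hF : ∀ x ∈ Set.Ioo d₀ R, HasDerivAt F
      ((ρ' x - φ' x) * Real.exp (I x) + (ρ x - φ x) * (Real.exp (I x) * g x)) x := by
    intro x hx'
    have hx : x ∈ Set.Icc d₀ R := Set.Ioo_subset_Icc_self hx'
    have hsne : sdelta δ x ≠ 0 := ne_of_gt (hspos x hx)
    have hφ'x : HasDerivAt φ (φ' x) x :=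
      (cdelta_hasDerivAt δ x).div (sdelta_hasDerivAt δ x) hsne
    have hφat : ContinuousAt φ x :=
      ((cdelta_continuous δ).continuousAt).div ((sdelta_continuous δ).continuousAt) hsne
    have hgat : ContinuousAt g x := ((hderiv x hx).continuousAt).add hφat
    have hmeas : StronglyMeasurableAtFilter g (nhds x) MeasureTheory.volume :=
      ContinuousOn.stronglyMeasurableAtFilter isOpen_Ioo
        (hgcont.mono Set.Ioo_subset_Icc_self) x hx'
    have hI : HasDerivAt I (g x) x :=
      intervalIntegral.integral_hasDerivAt_right (hgint x hx) hmeas hgat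
    exact ((hderiv x hx).sub hφ'x).mul hI.exp
  have hDnn : ∀ x ∈ Set.Ioo d₀ R,
      0 ≤ (ρ' x - φ' x) * Real.exp (I x) + (ρ x - φ x) * (Real.exp (I x) * g x) := by
    intro x hx'
    have hx : x ∈ Set.Icc d₀ R := Set.Ioo_subset_Icc_self hx'
    have hsne : sdelta δ x ≠ 0 := ne_of_gt (hspos x hx)
    have hkey : φ' x + (φ x) ^ 2 = -δ := by
      rw [hφ'def, hφdef]
      field_simp
      ring
    have heq : (ρ' x - φ' x) * Real.exp (I x) + (ρ x - φ x) * (Real.exp (I x) * g x)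
        = (ρ' x + ρ x ^ 2 - (φ' x + (φ x) ^ 2)) * Real.exp (I x) := by
      rw [hgdef]; ring
    rw [heq, hkey]
    have h1 : 0 ≤ ρ' x + ρ x ^ 2 - -δ := by linarith [(hric x hx).1]
    exact mul_nonneg h1 (Real.exp_pos _).le
  have hmono : MonotoneOn F (Set.Icc d₀ R) := by
    apply monotoneOn_of_deriv_nonneg (convex_Icc d₀ R) hFcont
    · rw [interior_Icc]
      intro x hx
      exact (hF x hx).differentiableAt.differentiableWithinAt
    · rw [interior_Icc]
      intro x hx
      rw [(hF x hx).deriv]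
      exact hDnn x hx
  have hFd₀ : F d₀ = ρ d₀ - φ d₀ := by
    simp [hFdef, hIdef, intervalIntegral.integral_same]
  refine ⟨hmono, fun t ht => ?_⟩
  have hd₀mem : d₀ ∈ Set.Icc d₀ R := ⟨le_refl _, hd₀R.le⟩
  have hFt : 0 ≤ F t := by
    have := hmono hd₀mem ht ht.1
    rw [hFd₀] at this
    have h0 : 0 ≤ ρ d₀ - φ d₀ := sub_nonneg.2 hinit
    linarith
  refine ⟨hFt, ?_⟩
  have := (mul_nonneg_iff_of_pos_right (Real.exp_pos (I t))).1 hFt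
  linarith
end

section
/- Let M^n be an immersed closed oriented hypersurface in a geodesic contractible ball around p₀ in N with K_N ≤ δ (radius ≤ π/(4√δ) if δ > 0). Then, integrating the divergence inequality, ∫_M c_δ(r) ≤ ∫_M |H|·s_δ(r), where r is the distance to p₀ and H the mean curvature. -/
open MeasureTheory

/-- `∫_M c_δ(r) ≤ ∫_M |H|·s_δ(r)` for a closed immersed oriented hypersurface
`M^n` in a geodesic contractible ball around `p₀` with `K_N ≤ δ`.  The closed hypersurface
is modeled by a finite measure space carrying: the distance function `r` to `p₀`, the mean
curvature `H`, the normal component `XN = ⟨X,ν⟩` of the position vector (so `|XN| ≤ s_δ(r)`),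
and `D = div_M X^⊤`, which satisfies Heintze's inequality `D ≥ n c_δ(r) - n H·XN`
and integrates to zero by the divergence theorem on the closed manifold `M`. -/
theorem integrated_heintze_ineq {M : Type*} [MeasurableSpace M] (μ : Measure M)
    [IsFiniteMeasure μ] (n : ℕ) (hn : 0 < n) (δ : ℝ) (r H XN D : M → ℝ)
    (hD : ∀ x, (n : ℝ) * cdelta δ (r x) - (n : ℝ) * H x * XN x ≤ D x)
    (hXN : ∀ x, |XN x| ≤ sdelta δ (r x))
    (hdiv : ∫ x, D x ∂μ = 0)
    (hintD : Integrable D μ)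
    (hintc : Integrable (fun x => cdelta δ (r x)) μ)
    (hints : Integrable (fun x => |H x| * sdelta δ (r x)) μ)
    (hintHX : Integrable (fun x => H x * XN x) μ) :
    ∫ x, cdelta δ (r x) ∂μ ≤ ∫ x, |H x| * sdelta δ (r x) ∂μ := by
  have h1 : ∫ x, cdelta δ (r x) ∂μ ≤ ∫ x, H x * XN x ∂μ := by
    have key : ∀ x, cdelta δ (r x) ≤ H x * XN x + D x / n := by
      intro x
      have := hD x
      have hn' : (0:ℝ) < n := by exact_mod_cast hn
      rw [← mul_le_mul_iff_right₀ hn', mul_add, mul_div_cancel₀ _ hn'.ne']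
      linarith
    calc ∫ x, cdelta δ (r x) ∂μ ≤ ∫ x, (H x * XN x + D x / n) ∂μ :=
          integral_mono hintc (hintHX.add (hintD.div_const _)) key
      _ = ∫ x, H x * XN x ∂μ + (∫ x, D x ∂μ) / n := by
          rw [integral_add hintHX (hintD.div_const _), integral_div]
      _ = ∫ x, H x * XN x ∂μ := by rw [hdiv]; simp
  refine h1.trans (integral_mono hintHX hints fun x => ?_)
  calc H x * XN x ≤ |H x * XN x| := le_abs_self _
    _ = |H x| * |XN x| := abs_mul _ _
    _ ≤ |H x| * sdelta δ (r x) := mul_le_mul_of_nonneg_left (hXN x) (abs_nonneg _)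
end

section
/- Let ψ(r) = ∫₁^r dτ/√(τ^{2(n−1)} − 1) for r ≥ 1 (n ≥ 2), and consider the n-dimensional catenoid piece in ℝ^{n+1} given by x_{n+1} = ε²·ψ(r/ε²) over ε² ≤ r ≤ ε. For n = 2 (where ψ = arccosh), the surface N_ε has principal curvatures ±ε²/r², induced metric g = (r²/(r²−ε⁴))dr² + r²dθ², and second fundamental form satisfying ∫_{N_ε} |B_ε|² dμ = 8π√(1−ε²); moreover for q > 2, ∫_{N_ε} |B_ε|^q dμ = 4π·2^{q/2}·ε^{4−2q}·∫₀^{arccosh(1/ε)} cosh^{2−2q}(t)dt → ∞ as ε → 0. -/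
open Real Filter

/-- Inverse hyperbolic cosine. -/
noncomputable def acosh (x : ℝ) : ℝ := Real.log (x + Real.sqrt (x ^ 2 - 1))

open MeasureTheory Set intervalIntegral




private lemma cosh_acosh {x : ℝ} (hx : 1 ≤ x) : Real.cosh (acosh x) = x := by
  have h1 : (0:ℝ) ≤ x ^ 2 - 1 := by nlinarith
  have hs : Real.sqrt (x ^ 2 - 1) ^ 2 = x ^ 2 - 1 := Real.sq_sqrt h1
  have hs0 : 0 ≤ Real.sqrt (x ^ 2 - 1) := Real.sqrt_nonneg _
  have hu : 0 < x + Real.sqrt (x ^ 2 - 1) := by nlinarith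
  have hmul : (x + Real.sqrt (x ^ 2 - 1)) * (x - Real.sqrt (x ^ 2 - 1)) = 1 := by nlinarith
  have hinv : (x + Real.sqrt (x ^ 2 - 1))⁻¹ = x - Real.sqrt (x ^ 2 - 1) :=
    inv_eq_of_mul_eq_one_right hmul
  rw [acosh, Real.cosh_eq, Real.exp_log hu, Real.exp_neg, Real.exp_log hu, hinv]
  ring

private lemma acosh_nonneg {x : ℝ} (hx : 1 ≤ x) : 0 ≤ acosh x := by
  have hs0 : 0 ≤ Real.sqrt (x ^ 2 - 1) := Real.sqrt_nonneg _
  exact Real.log_nonneg (by nlinarith)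

private lemma acosh_pos {x : ℝ} (hx : 1 < x) : 0 < acosh x := by
  have h1 : (0:ℝ) < x ^ 2 - 1 := by nlinarith
  have hs0 : 0 < Real.sqrt (x ^ 2 - 1) := Real.sqrt_pos.2 h1
  exact Real.log_pos (by nlinarith)

private lemma one_le_acosh {x : ℝ} (hx : Real.cosh 1 ≤ x) : 1 ≤ acosh x := by
  have hx1 : (1:ℝ) ≤ x := le_trans (Real.one_le_cosh 1) hx
  by_contra h
  push_neg at h
  have : Real.cosh (acosh x) < Real.cosh 1 := by
    rw [Real.cosh_lt_cosh, abs_of_nonneg (acosh_nonneg hx1)]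
    simpa using h
  rw [cosh_acosh hx1] at this
  linarith

private lemma integrable_of_bound {a b C : ℝ} (hab : a ≤ b) (g : ℝ → ℝ)
    (hg : AEStronglyMeasurable g (volume.restrict (Set.uIoc a b)))
    (hbound : ∀ r ∈ Set.Ioc a b, |g r| ≤ C * (r - a) ^ (-(1:ℝ)/2)) :
    IntervalIntegrable g volume a b := by
  have h0 : IntervalIntegrable (fun x : ℝ => x ^ (-(1:ℝ)/2)) volume 0 (b - a) :=
    intervalIntegral.intervalIntegrable_rpow' (by norm_num)
  have h1 := h0.comp_sub_right a
  rw [zero_add, sub_add_cancel] at h1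
  have h2 := h1.const_mul C
  refine h2.mono_fun hg ?_
  rw [Set.uIoc_of_le hab]
  refine (MeasureTheory.ae_restrict_iff' measurableSet_Ioc).2 (Filter.Eventually.of_forall ?_)
  intro r hr
  simp only [Real.norm_eq_abs]
  exact (hbound r hr).trans (le_abs_self _)


private lemma hasDerivAt_catenoid {ε r : ℝ} (hε : 0 < ε) (h1 : ε ^ 2 < r) (h2 : r < ε) :
    HasDerivAt (fun ρ : ℝ => 1 + ε ^ 2 * acosh (ρ / ε ^ 2))
      (ε ^ 2 / Real.sqrt (r ^ 2 - ε ^ 4)) r := by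
  have he2 : (0:ℝ) < ε ^ 2 := by positivity
  have hr0 : 0 < r := lt_trans he2 h1
  have hx1 : 1 < r / ε ^ 2 := (one_lt_div he2).2 h1
  have hv0 : (0:ℝ) < (r / ε ^ 2) ^ 2 - 1 := by nlinarith
  have hS0 : 0 < Real.sqrt (r ^ 2 - ε ^ 4) := Real.sqrt_pos.2 (by nlinarith)
  set S := Real.sqrt (r ^ 2 - ε ^ 4) with hSdef
  have hS2 : S ^ 2 = r ^ 2 - ε ^ 4 := Real.sq_sqrt (by nlinarith)
  -- sqrt identity
  have hsq : Real.sqrt ((r / ε ^ 2) ^ 2 - 1) = S / ε ^ 2 := by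
    rw [show (r / ε ^ 2) ^ 2 - 1 = (r ^ 2 - ε ^ 4) / (ε ^ 2) ^ 2 by field_simp,
      Real.sqrt_div (by nlinarith) ((ε ^ 2) ^ 2), Real.sqrt_sq (le_of_lt he2)]
  -- derivative pieces
  have hid : HasDerivAt (fun ρ : ℝ => ρ / ε ^ 2) (1 / ε ^ 2) r := by
    simpa using (hasDerivAt_id r).div_const (ε ^ 2)
  have hv : HasDerivAt (fun ρ : ℝ => (ρ / ε ^ 2) ^ 2 - 1)
      (2 * (r / ε ^ 2) ^ 1 * (1 / ε ^ 2)) r := by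
    simpa using (hid.pow 2).sub_const 1
  have hs : HasDerivAt (fun ρ : ℝ => Real.sqrt ((ρ / ε ^ 2) ^ 2 - 1))
      (2 * (r / ε ^ 2) ^ 1 * (1 / ε ^ 2) / (2 * Real.sqrt ((r / ε ^ 2) ^ 2 - 1))) r :=
    hv.sqrt (ne_of_gt hv0)
  have hu := hid.add hs
  have hu0 : r / ε ^ 2 + Real.sqrt ((r / ε ^ 2) ^ 2 - 1) ≠ 0 := by
    have := Real.sqrt_nonneg ((r / ε ^ 2) ^ 2 - 1); positivity
  have hlog := hu.log hu0
  have hfinal := (hlog.const_mul (ε ^ 2)).const_add 1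
  have hfun : (fun ρ : ℝ => 1 + ε ^ 2 * acosh (ρ / ε ^ 2)) =
      fun ρ : ℝ => 1 + ε ^ 2 * Real.log (ρ / ε ^ 2 + Real.sqrt ((ρ / ε ^ 2) ^ 2 - 1)) := rfl
  rw [hfun]
  refine hfinal.congr_deriv ?_
  simp only [Pi.add_apply]
  rw [hsq]
  have hden : r / ε ^ 2 + S / ε ^ 2 ≠ 0 := by positivity
  field_simp
  ring

-- sqrt lower bound helper
private lemma sqrt_lower {ε r : ℝ} (hε : 0 < ε) (h1 : ε ^ 2 < r) :
    ε * Real.sqrt (r - ε ^ 2) ≤ Real.sqrt (r ^ 2 - ε ^ 4) := by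
  have h : ε * Real.sqrt (r - ε ^ 2) = Real.sqrt (ε ^ 2 * (r - ε ^ 2)) := by
    rw [Real.sqrt_mul (by positivity), Real.sqrt_sq hε.le]
  rw [h]
  apply Real.sqrt_le_sqrt
  nlinarith

private lemma rpow_half_eq {x : ℝ} (hx : 0 < x) : x ^ (-(1:ℝ)/2) = (Real.sqrt x)⁻¹ := by
  rw [Real.sqrt_eq_rpow, ← Real.rpow_neg hx.le, neg_div]

private lemma partB_integrand_int {ε : ℝ} (hε : 0 < ε) (hε1 : ε < 1) :
    IntervalIntegrable (fun r => 2 * ε ^ 4 / r ^ 4 * (r ^ 2 / Real.sqrt (r ^ 2 - ε ^ 4)))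
      volume (ε ^ 2) ε := by
  have hee : ε ^ 2 ≤ ε := by nlinarith
  apply integrable_of_bound (C := 2 / ε) hee
  · apply Measurable.aestronglyMeasurable
    fun_prop
  · intro r hr
    have hr0 : 0 < r := lt_trans (by positivity) hr.1
    have hS0 : 0 < Real.sqrt (r ^ 2 - ε ^ 4) := Real.sqrt_pos.2 (by nlinarith [hr.1])
    have hq0 : 0 < Real.sqrt (r - ε ^ 2) := Real.sqrt_pos.2 (by linarith [hr.1])
    have hb := sqrt_lower hε hr.1
    rw [abs_of_nonneg (by positivity), rpow_half_eq (by linarith [hr.1])]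
    rw [div_mul_div_comm, div_le_iff₀ (by positivity),
      show 2 / ε * (Real.sqrt (r - ε ^ 2))⁻¹ * (r ^ 4 * Real.sqrt (r ^ 2 - ε ^ 4)) =
        2 * (r ^ 4 * Real.sqrt (r ^ 2 - ε ^ 4)) / (ε * Real.sqrt (r - ε ^ 2)) by
          field_simp, le_div_iff₀ (by positivity)]
    have h1 : ε ^ 4 ≤ r ^ 2 := by nlinarith [hr.1]
    nlinarith [mul_le_mul_of_nonneg_left hb (by positivity : (0:ℝ) ≤ 2 * r ^ 2 * ε ^ 4),
      mul_le_mul_of_nonneg_left h1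
        (by positivity : (0:ℝ) ≤ 2 * r ^ 2 * Real.sqrt (r ^ 2 - ε ^ 4))]
private lemma partB_value {ε : ℝ} (hε : 0 < ε) (hε1 : ε < 1) :
    ∫ r in (ε ^ 2)..ε, 2 * ε ^ 4 / r ^ 4 * (r ^ 2 / Real.sqrt (r ^ 2 - ε ^ 4)) =
      2 * Real.sqrt (1 - ε ^ 2) := by
  have hee : ε ^ 2 ≤ ε := by nlinarith
  have hF : ∀ r ∈ Set.Ioo (ε ^ 2) ε,
      HasDerivWithinAt (fun r => 2 * (Real.sqrt (r ^ 2 - ε ^ 4) / r))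
        (2 * ε ^ 4 / r ^ 4 * (r ^ 2 / Real.sqrt (r ^ 2 - ε ^ 4))) (Set.Ioi r) r := by
    intro r hr
    have hr0 : 0 < r := lt_trans (by positivity) hr.1
    have hv0 : (0:ℝ) < r ^ 2 - ε ^ 4 := by nlinarith [hr.1]
    have hS0 : 0 < Real.sqrt (r ^ 2 - ε ^ 4) := Real.sqrt_pos.2 hv0
    have hS2 : Real.sqrt (r ^ 2 - ε ^ 4) ^ 2 = r ^ 2 - ε ^ 4 := Real.sq_sqrt hv0.le
    have hv : HasDerivAt (fun r : ℝ => r ^ 2 - ε ^ 4) (2 * r ^ 1) r := by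
      simpa using ((hasDerivAt_id r).pow 2).sub_const (ε ^ 4)
    have hs := hv.sqrt (ne_of_gt hv0)
    have hdiv := hs.div (hasDerivAt_id r) (ne_of_gt hr0)
    have h := (hdiv.const_mul 2).hasDerivWithinAt (s := Set.Ioi r)
    refine h.congr_deriv ?_
    set S := Real.sqrt (r ^ 2 - ε ^ 4)
    simp only [id]
    field_simp
    linear_combination (-1) * hS2
  have hcont : ContinuousOn (fun r => 2 * (Real.sqrt (r ^ 2 - ε ^ 4) / r))
      (Set.Icc (ε ^ 2) ε) := by
    apply ContinuousOn.mul continuousOn_const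
    apply ContinuousOn.div
    · exact (Real.continuous_sqrt.comp (by continuity)).continuousOn
    · exact continuousOn_id
    · intro x hx
      have : (0:ℝ) < ε ^ 2 := by positivity
      exact ne_of_gt (lt_of_lt_of_le this hx.1)
  have := intervalIntegral.integral_eq_sub_of_hasDeriv_right_of_le hee hcont hF
    (partB_integrand_int hε hε1)
  rw [this]
  have h1 : Real.sqrt (ε ^ 2 - ε ^ 4) = ε * Real.sqrt (1 - ε ^ 2) := by
    rw [show ε ^ 2 - ε ^ 4 = ε ^ 2 * (1 - ε ^ 2) by ring,
      Real.sqrt_mul (by positivity), Real.sqrt_sq hε.le]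
  have h2 : Real.sqrt ((ε ^ 2) ^ 2 - ε ^ 4) = 0 := by
    norm_num [show (ε ^ 2) ^ 2 - ε ^ 4 = 0 by ring]
  rw [h1, h2]
  field_simp
  ring
private lemma partC_integrand_int {ε q : ℝ} (hε : 0 < ε) (hε1 : ε < 1) (hq : 2 < q) :
    IntervalIntegrable
      (fun r => (2 * ε ^ 4 / r ^ 4) ^ (q / 2) * (r ^ 2 / Real.sqrt (r ^ 2 - ε ^ 4)))
      volume (ε ^ 2) ε := by
  have hee : ε ^ 2 ≤ ε := by nlinarith
  apply integrable_of_bound (C := (2 / ε ^ 4) ^ (q / 2) * ε) hee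
  · apply Measurable.aestronglyMeasurable
    fun_prop
  · intro r hr
    have hr0 : 0 < r := lt_trans (by positivity) hr.1
    have hS0 : 0 < Real.sqrt (r ^ 2 - ε ^ 4) := Real.sqrt_pos.2 (by nlinarith [hr.1])
    have hq0 : 0 < Real.sqrt (r - ε ^ 2) := Real.sqrt_pos.2 (by linarith [hr.1])
    have hb := sqrt_lower hε hr.1
    rw [abs_of_nonneg (by positivity), rpow_half_eq (by linarith [hr.1])]
    have h1 : (2 * ε ^ 4 / r ^ 4) ^ (q / 2) ≤ (2 / ε ^ 4) ^ (q / 2) := by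
      apply Real.rpow_le_rpow (by positivity) ?_ (by linarith)
      rw [div_le_div_iff₀ (by positivity) (by positivity)]
      nlinarith [pow_le_pow_left₀ (by positivity : (0:ℝ) ≤ ε ^ 2) hr.1.le 4]
    have h2 : r ^ 2 / Real.sqrt (r ^ 2 - ε ^ 4) ≤ ε ^ 2 / (ε * Real.sqrt (r - ε ^ 2)) := by
      apply div_le_div₀ (by positivity) (by nlinarith [hr.2]) (by positivity) hb
    calc (2 * ε ^ 4 / r ^ 4) ^ (q / 2) * (r ^ 2 / Real.sqrt (r ^ 2 - ε ^ 4))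
        ≤ (2 / ε ^ 4) ^ (q / 2) * (ε ^ 2 / (ε * Real.sqrt (r - ε ^ 2))) := by
          apply mul_le_mul h1 h2 (by positivity) (by positivity)
      _ = (2 / ε ^ 4) ^ (q / 2) * ε * (Real.sqrt (r - ε ^ 2))⁻¹ := by
          field_simp
private lemma comp_eq {ε q t : ℝ} (hε : 0 < ε) (ht : 0 < t) :
    ε ^ 2 * Real.sinh t *
      ((2 * ε ^ 4 / (ε ^ 2 * Real.cosh t) ^ 4) ^ (q / 2) *
        ((ε ^ 2 * Real.cosh t) ^ 2 / Real.sqrt ((ε ^ 2 * Real.cosh t) ^ 2 - ε ^ 4))) =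
    (2:ℝ) ^ (q / 2) * ε ^ (4 - 2 * q) * Real.cosh t ^ (2 - 2 * q) := by
  have hc : 0 < Real.cosh t := Real.cosh_pos t
  have hc1 : 1 ≤ Real.cosh t := Real.one_le_cosh t
  have hs : 0 < Real.sinh t := Real.sinh_pos_iff.2 ht
  have hsq : Real.sqrt ((ε ^ 2 * Real.cosh t) ^ 2 - ε ^ 4) = ε ^ 2 * Real.sinh t := by
    rw [show (ε ^ 2 * Real.cosh t) ^ 2 - ε ^ 4 = (ε ^ 2 * Real.sinh t) ^ 2 by
      have := Real.cosh_sq t; nlinarith [this]]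
    exact Real.sqrt_sq (by positivity)
  have hbase : 2 * ε ^ 4 / (ε ^ 2 * Real.cosh t) ^ 4 = 2 / (ε ^ 2 * Real.cosh t ^ 2) ^ 2 := by
    field_simp
  have hw : (0:ℝ) < ε ^ 2 * Real.cosh t ^ 2 := by positivity
  have hrpow : (2 / (ε ^ 2 * Real.cosh t ^ 2) ^ 2) ^ (q / 2) =
      2 ^ (q / 2) / (ε ^ (2 * q) * Real.cosh t ^ (2 * q) : ℝ) := by
    rw [Real.div_rpow (by norm_num) (by positivity)]
    congr 1
    rw [← Real.rpow_natCast (ε ^ 2 * Real.cosh t ^ 2) 2, ← Real.rpow_mul hw.le]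
    rw [Real.mul_rpow (by positivity) (by positivity)]
    rw [← Real.rpow_natCast ε 2, ← Real.rpow_natCast (Real.cosh t) 2,
      ← Real.rpow_mul hε.le, ← Real.rpow_mul hc.le]
    norm_num
    rw [show 2 * (2 * (q / 2)) = 2 * q by ring]
  rw [hsq, hbase, hrpow]
  have he1 : ε ^ (4 - 2 * q) = ε ^ (4:ℕ) / ε ^ (2 * q) := by
    rw [eq_div_iff (ne_of_gt (Real.rpow_pos_of_pos hε _)), ← Real.rpow_natCast ε 4,
      ← Real.rpow_add hε]
    norm_num
  have he2 : Real.cosh t ^ (2 - 2 * q) = Real.cosh t ^ (2:ℕ) / Real.cosh t ^ (2 * q) := by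
    rw [eq_div_iff (ne_of_gt (Real.rpow_pos_of_pos hc _)), ← Real.rpow_natCast (Real.cosh t) 2,
      ← Real.rpow_add hc]
    norm_num
  rw [he1, he2]
  have hne1 : ε ^ (2 * q) ≠ 0 := ne_of_gt (Real.rpow_pos_of_pos hε _)
  have hne2 : Real.cosh t ^ (2 * q) ≠ 0 := ne_of_gt (Real.rpow_pos_of_pos hc _)
  field_simp
private lemma partC_value {ε q : ℝ} (hε : 0 < ε) (hε1 : ε < 1) (hq : 2 < q) :
    ∫ r in (ε ^ 2)..ε, (2 * ε ^ 4 / r ^ 4) ^ (q / 2) * (r ^ 2 / Real.sqrt (r ^ 2 - ε ^ 4)) =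
      (2:ℝ) ^ (q / 2) * ε ^ (4 - 2 * q) *
        ∫ t in (0:ℝ)..(acosh (1 / ε)), Real.cosh t ^ (2 - 2 * q) := by
  have hinv : 1 < 1 / ε := one_lt_one_div hε hε1
  set T := acosh (1 / ε) with hTdef
  have hT0 : 0 < T := acosh_pos hinv
  have hcoshT : Real.cosh T = 1 / ε := cosh_acosh hinv.le
  set φ : ℝ → ℝ := fun t => ε ^ 2 * Real.cosh t with hφdef
  set G : ℝ → ℝ :=
    fun r => (2 * ε ^ 4 / r ^ 4) ^ (q / 2) * (r ^ 2 / Real.sqrt (r ^ 2 - ε ^ 4)) with hGdef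
  have hφ0 : φ 0 = ε ^ 2 := by simp [hφdef]
  have hφT : φ T = ε := by
    rw [hφdef]; simp only [hcoshT]; field_simp
  have himage : ∀ t ∈ Set.Icc (0:ℝ) T, φ t ∈ Set.Icc (ε ^ 2) ε := by
    intro t ht
    have h1 : 1 ≤ Real.cosh t := Real.one_le_cosh t
    have h2 : Real.cosh t ≤ Real.cosh T := by
      rw [Real.cosh_le_cosh, abs_of_nonneg ht.1, abs_of_nonneg hT0.le]; exact ht.2
    rw [hcoshT] at h2
    constructor
    · show ε ^ 2 ≤ ε ^ 2 * Real.cosh t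
      nlinarith [mul_le_mul_of_nonneg_left h1 (show (0:ℝ) ≤ ε ^ 2 by positivity)]
    · show ε ^ 2 * Real.cosh t ≤ ε
      calc ε ^ 2 * Real.cosh t ≤ ε ^ 2 * (1 / ε) :=
            mul_le_mul_of_nonneg_left h2 (by positivity)
        _ = ε := by field_simp
  have himageo : ∀ t ∈ Set.Ioo (0:ℝ) T, φ t ∈ Set.Ioo (ε ^ 2) ε := by
    intro t ht
    have h1 : 1 < Real.cosh t := by
      rw [show (1:ℝ) = Real.cosh 0 by simp, Real.cosh_lt_cosh]
      simp [abs_of_nonneg ht.1.le, ht.1, abs_of_pos ht.1]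
    have h2 : Real.cosh t < Real.cosh T := by
      rw [Real.cosh_lt_cosh, abs_of_pos ht.1, abs_of_pos hT0]; exact ht.2
    rw [hcoshT] at h2
    constructor
    · show ε ^ 2 < ε ^ 2 * Real.cosh t
      nlinarith [mul_lt_mul_of_pos_left h1 (show (0:ℝ) < ε ^ 2 by positivity)]
    · show ε ^ 2 * Real.cosh t < ε
      calc ε ^ 2 * Real.cosh t < ε ^ 2 * (1 / ε) :=
            mul_lt_mul_of_pos_left h2 (by positivity)
        _ = ε := by field_simp
  have hGcont : ContinuousOn G (Set.Ioo (ε ^ 2) ε) := by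
    rw [hGdef]
    apply ContinuousOn.mul
    · apply ContinuousOn.rpow_const
      · apply ContinuousOn.div continuousOn_const (by fun_prop)
        intro x hx
        have hx0 : 0 < x := lt_trans (by positivity) hx.1
        positivity
      · intro x hx
        have hx0 : 0 < x := lt_trans (by positivity) hx.1
        exact Or.inl (by positivity)
    · apply ContinuousOn.div (by fun_prop)
      · exact (Real.continuous_sqrt.comp (by continuity)).continuousOn
      · intro x hx
        exact ne_of_gt (Real.sqrt_pos.2 (by nlinarith [hx.1,
          (show (0:ℝ) < ε ^ 2 by positivity)]))
  have hint : IntervalIntegrable G volume (ε ^ 2) ε := partC_integrand_int hε hε1 hq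
  have hee : ε ^ 2 ≤ ε := by nlinarith
  have hnice : Continuous fun t : ℝ =>
      (2:ℝ) ^ (q / 2) * ε ^ (4 - 2 * q) * Real.cosh t ^ (2 - 2 * q) := by
    apply continuous_const.mul
    exact Real.continuous_cosh.rpow_const fun x => Or.inl (ne_of_gt (Real.cosh_pos x))
  have hae0 : ∀ᵐ t : ℝ, t ≠ (0:ℝ) := by
    rw [MeasureTheory.ae_iff]
    simp only [ne_eq, not_not, Set.setOf_eq_eq_singleton]
    exact MeasureTheory.measure_singleton 0
  have hcompeq : ∀ t : ℝ, 0 < t →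
      (fun x => (ε ^ 2 * Real.sinh x) • (G ∘ φ) x) t =
        (2:ℝ) ^ (q / 2) * ε ^ (4 - 2 * q) * Real.cosh t ^ (2 - 2 * q) := by
    intro t ht
    simp only [Function.comp, hGdef, hφdef, smul_eq_mul]
    exact comp_eq hε ht
  have hg1 : MeasureTheory.IntegrableOn G (φ '' Set.uIcc 0 T) := by
    apply MeasureTheory.IntegrableOn.mono_set ((intervalIntegrable_iff' (f := G) (a := ε ^ 2) (b := ε) (μ := volume)).1 hint)
    rw [Set.uIcc_of_le hT0.le, Set.uIcc_of_le hee]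
    exact Set.image_subset_iff.2 himage
  have hg2 : MeasureTheory.IntegrableOn
      (fun x => (ε ^ 2 * Real.sinh x) • (G ∘ φ) x) (Set.uIcc 0 T) := by
    rw [Set.uIcc_of_le hT0.le]
    apply MeasureTheory.Integrable.congr (hnice.integrableOn_Icc)
    filter_upwards [MeasureTheory.ae_restrict_mem measurableSet_Icc,
      MeasureTheory.ae_restrict_of_ae hae0] with t htmem htne
    exact (hcompeq t (lt_of_le_of_ne htmem.1 (Ne.symm htne))).symm
  have hsub := intervalIntegral.integral_comp_smul_deriv''' (a := 0) (b := T)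
    (f := φ) (f' := fun t => ε ^ 2 * Real.sinh t) (g := G)
    ((continuous_const.mul Real.continuous_cosh).continuousOn)
    (fun x _ => (((Real.hasDerivAt_cosh x).const_mul (ε ^ 2)).hasDerivWithinAt))
    (by
      rw [min_eq_left hT0.le, max_eq_right hT0.le]
      exact hGcont.mono (Set.image_subset_iff.2 himageo))
    hg1 hg2
  rw [hφ0, hφT] at hsub
  have hai : ∀ᵐ t : ℝ, t ∈ Set.uIoc (0:ℝ) T →
      (fun x => (ε ^ 2 * Real.sinh x) • (G ∘ φ) x) t =
        (2:ℝ) ^ (q / 2) * ε ^ (4 - 2 * q) * Real.cosh t ^ (2 - 2 * q) := by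
    apply Filter.Eventually.of_forall
    intro t htmem
    rw [Set.uIoc_of_le hT0.le] at htmem
    exact hcompeq t htmem.1
  have h2 := intervalIntegral.integral_congr_ae hai
  rw [← hsub, h2, intervalIntegral.integral_const_mul]

/-- the catenoid neck, `n = 2`, `ψ = arccosh`: the catenoid piece
`z = 1 + ε²·arccosh(r/ε²)`, `ε² ≤ r ≤ ε`.  Its profile has slope
`f'(r) = ε²/√(r²−ε⁴)`, principal curvatures `κ₂ = f'/(r√(1+f'²)) = ε²/r²` and
`κ₁ = f''/(1+f'²)^{3/2} = −ε²/r²`, induced metric `g = (r²/(r²−ε⁴))dr² + r²dθ²`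
(i.e. `1+f'² = r²/(r²−ε⁴)`), and the second fundamental form (with `|B_ε|² = 2ε⁴/r⁴`,
`dμ = (r²/√(r²−ε⁴)) dr dθ`) satisfies `∫|B_ε|² dμ = 8π√(1−ε²)`; moreover for `q > 2`,
`∫|B_ε|^q dμ = 4π·2^{q/2}·ε^{4−2q}·∫₀^{arccosh(1/ε)} cosh^{2−2q}t dt → ∞` as `ε → 0⁺`. -/
theorem catenoid_second_fundamental_form :
    (∀ ε : ℝ, 0 < ε → ε < 1 →
      (∀ r : ℝ, ε ^ 2 < r → r < ε →
        HasDerivAt (fun ρ : ℝ => 1 + ε ^ 2 * acosh (ρ / ε ^ 2))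
          (ε ^ 2 / Real.sqrt (r ^ 2 - ε ^ 4)) r ∧
        (ε ^ 2 / Real.sqrt (r ^ 2 - ε ^ 4)) /
            (r * Real.sqrt (1 + (ε ^ 2 / Real.sqrt (r ^ 2 - ε ^ 4)) ^ 2)) = ε ^ 2 / r ^ 2 ∧
        (-(ε ^ 2 * r / (Real.sqrt (r ^ 2 - ε ^ 4)) ^ 3)) /
            (Real.sqrt (1 + (ε ^ 2 / Real.sqrt (r ^ 2 - ε ^ 4)) ^ 2)) ^ 3 =
          -(ε ^ 2 / r ^ 2) ∧
        1 + (ε ^ 2 / Real.sqrt (r ^ 2 - ε ^ 4)) ^ 2 = r ^ 2 / (r ^ 2 - ε ^ 4)) ∧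
      (2 : ℝ) * ∫ r in (ε ^ 2)..ε, (∫ _θ in (0:ℝ)..(2 * π),
          (2 * ε ^ 4 / r ^ 4) * (r ^ 2 / Real.sqrt (r ^ 2 - ε ^ 4))) =
        8 * π * Real.sqrt (1 - ε ^ 2)) ∧
    (∀ q : ℝ, 2 < q →
      (∀ ε : ℝ, 0 < ε → ε < 1 →
        (2 : ℝ) * ∫ r in (ε ^ 2)..ε, (∫ _θ in (0:ℝ)..(2 * π),
            ((2 * ε ^ 4 / r ^ 4) ^ (q / 2)) * (r ^ 2 / Real.sqrt (r ^ 2 - ε ^ 4))) =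
          4 * π * (2 : ℝ) ^ (q / 2) * ε ^ (4 - 2 * q) *
            ∫ t in (0:ℝ)..(acosh (1 / ε)), (Real.cosh t) ^ (2 - 2 * q)) ∧
      Tendsto (fun ε : ℝ => (2 : ℝ) * ∫ r in (ε ^ 2)..ε, (∫ _θ in (0:ℝ)..(2 * π),
          ((2 * ε ^ 4 / r ^ 4) ^ (q / 2)) * (r ^ 2 / Real.sqrt (r ^ 2 - ε ^ 4))))
        (nhdsWithin 0 (Set.Ioo 0 1)) atTop) := by
  constructor
  · intro ε hε hε1
    constructor
    · intro r h1 h2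
      have he2 : (0:ℝ) < ε ^ 2 := by positivity
      have hr0 : 0 < r := lt_trans he2 h1
      have hv0 : (0:ℝ) < r ^ 2 - ε ^ 4 := by nlinarith
      have hS0 : 0 < Real.sqrt (r ^ 2 - ε ^ 4) := Real.sqrt_pos.2 hv0
      have hS2 : Real.sqrt (r ^ 2 - ε ^ 4) ^ 2 = r ^ 2 - ε ^ 4 := Real.sq_sqrt hv0.le
      set S := Real.sqrt (r ^ 2 - ε ^ 4) with hSdef
      have h14 : 1 + (ε ^ 2 / S) ^ 2 = r ^ 2 / (r ^ 2 - ε ^ 4) := by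
        rw [← hS2]
        field_simp
        linear_combination hS2
      have hsq14 : Real.sqrt (1 + (ε ^ 2 / S) ^ 2) = r / S := by
        rw [h14, ← hS2, ← div_pow]
        exact Real.sqrt_sq (by positivity)
      refine ⟨hasDerivAt_catenoid hε h1 h2, ?_, ?_, h14⟩
      · rw [hsq14]; field_simp
      · rw [hsq14]; field_simp
    · simp only [intervalIntegral.integral_const, smul_eq_mul, sub_zero]
      rw [intervalIntegral.integral_const_mul, partB_value hε hε1]
      ring
  · intro q hq
    have hC1 : ∀ ε : ℝ, 0 < ε → ε < 1 →
        (2 : ℝ) * ∫ r in (ε ^ 2)..ε, (∫ _θ in (0:ℝ)..(2 * π),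
            ((2 * ε ^ 4 / r ^ 4) ^ (q / 2)) * (r ^ 2 / Real.sqrt (r ^ 2 - ε ^ 4))) =
          4 * π * (2 : ℝ) ^ (q / 2) * ε ^ (4 - 2 * q) *
            ∫ t in (0:ℝ)..(acosh (1 / ε)), (Real.cosh t) ^ (2 - 2 * q) := by
      intro ε hε hε1
      simp only [intervalIntegral.integral_const, smul_eq_mul, sub_zero]
      rw [intervalIntegral.integral_const_mul, partC_value hε hε1 hq]
      ring
    refine ⟨hC1, ?_⟩
    have hq2 : (0:ℝ) < 2 * q - 4 := by linarith
    have hfc : Continuous fun t : ℝ => Real.cosh t ^ (2 - 2 * q) :=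
      Real.continuous_cosh.rpow_const fun x => Or.inl (ne_of_gt (Real.cosh_pos x))
    have hc0 : 0 < ∫ t in (0:ℝ)..1, Real.cosh t ^ (2 - 2 * q) :=
      intervalIntegral.intervalIntegral_pos_of_pos_on (hfc.intervalIntegrable 0 1)
        (fun x _ => Real.rpow_pos_of_pos (Real.cosh_pos x) _) one_pos
    set c₀ := ∫ t in (0:ℝ)..1, Real.cosh t ^ (2 - 2 * q) with hc₀def
    set K := 4 * π * (2:ℝ) ^ (q / 2) * c₀ with hKdef
    have hK : 0 < K := by
      apply mul_pos (mul_pos (by positivity) (Real.rpow_pos_of_pos two_pos _)) hc0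
    have hc1p : (0:ℝ) < Real.cosh 1 := Real.cosh_pos 1
    have hbound : ∀ᶠ ε in nhdsWithin (0:ℝ) (Set.Ioo 0 1),
        K * ε ^ (4 - 2 * q) ≤ (2 : ℝ) * ∫ r in (ε ^ 2)..ε, (∫ _θ in (0:ℝ)..(2 * π),
          ((2 * ε ^ 4 / r ^ 4) ^ (q / 2)) * (r ^ 2 / Real.sqrt (r ^ 2 - ε ^ 4))) := by
      have hsmall : ∀ᶠ ε in nhdsWithin (0:ℝ) (Set.Ioo 0 1), ε < 1 / Real.cosh 1 :=
        Filter.Eventually.filter_mono nhdsWithin_le_nhds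
          (Filter.Tendsto.eventually_lt_const (by positivity) tendsto_id)
      filter_upwards [self_mem_nhdsWithin, hsmall] with ε hεmem hεsmall
      obtain ⟨hε, hε1⟩ := hεmem
      rw [hC1 ε hε hε1]
      have hcosh1 : Real.cosh 1 ≤ 1 / ε := by
        rw [le_div_iff₀ hε]
        nlinarith [(lt_div_iff₀ hc1p).1 hεsmall]
      have hT1 : 1 ≤ acosh (1 / ε) := one_le_acosh hcosh1
      have hI : c₀ ≤ ∫ t in (0:ℝ)..(acosh (1 / ε)), Real.cosh t ^ (2 - 2 * q) := by
        apply intervalIntegral.integral_mono_interval (le_refl (0:ℝ)) zero_le_one hT1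
        · exact Filter.Eventually.of_forall fun x =>
            le_of_lt (Real.rpow_pos_of_pos (Real.cosh_pos x) _)
        · exact hfc.intervalIntegrable 0 _
      calc K * ε ^ (4 - 2 * q) = 4 * π * (2:ℝ) ^ (q / 2) * ε ^ (4 - 2 * q) * c₀ := by ring
        _ ≤ 4 * π * (2:ℝ) ^ (q / 2) * ε ^ (4 - 2 * q) *
            ∫ t in (0:ℝ)..(acosh (1 / ε)), Real.cosh t ^ (2 - 2 * q) := by
          apply mul_le_mul_of_nonneg_left hI
          apply mul_nonneg (mul_nonneg (by positivity)
            (Real.rpow_pos_of_pos two_pos _).le) (Real.rpow_nonneg hε.le _)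
    have hten : Tendsto (fun ε : ℝ => K * ε ^ (4 - 2 * q))
        (nhdsWithin (0:ℝ) (Set.Ioo 0 1)) atTop := by
      apply Filter.Tendsto.const_mul_atTop hK
      have h1 : Tendsto (fun ε : ℝ => ε⁻¹) (nhdsWithin (0:ℝ) (Set.Ioo 0 1)) atTop :=
        tendsto_inv_nhdsGT_zero.mono_left (nhdsWithin_mono _ Set.Ioo_subset_Ioi_self)
      have h2 := (tendsto_rpow_atTop hq2).comp h1
      apply h2.congr'
      filter_upwards [self_mem_nhdsWithin] with ε hεmem
      show (ε⁻¹) ^ (2 * q - 4) = ε ^ (4 - 2 * q)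
      rw [Real.inv_rpow hεmem.1.le, ← Real.rpow_neg hεmem.1.le]
      congr 1
      ring
    exact tendsto_atTop_mono' _ hbound hten
end
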